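/- Let α > 0 and β > 0, and for shape a > 0 and rate β let F_{a,β} denote the gamma cumulative distribution function, F_{a,β}(x) = (β^a / Γ(a)) ∫_0^x t^{a−1} e^{−βt} dt for x ≥ 0 and F_{a,β}(x) = 0 for x < 0, where Γ is the gamma function. Let B(p, q) = Γ(p)Γ(q)/Γ(p+q) denote the beta function. Then for every threshold τ ≥ 0 and observation y ≥ 0, writing v = max(y, τ): twCRPS_τ(F_{α,β}, y) = −τ F_{α,β}(τ)² + v (2 F_{α,β}(v) − 1) + (α/β) (1 − F_{α,β}(τ)² + 2 F_{α,β}(τ) F_{α+1,β}(τ) − 2 F_{α+1,β}(v)) − (1 − F_{2α,β}(2τ)) / (β B(1/2, α)). -/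

import Mathlib

/-
Write the right-hand side as `P(τ) + Q(max y τ)`, where `P` collects the terms in `τ` and `Q`
those in `v = max y τ`. Away from `τ = y` its derivative in `τ` is `-(F(τ) - 𝟙{τ ≥ y})²`; this
uses `x f_a(x) = (a/β) f_{a+1}(x)`, `F_a - F_{a+1} = f_{a+1} / β`, and Legendre's duplication
formula, which turns `f_a(x) f_{a+1}(x)` into a multiple of `f_{2a}(2x)`. The right-hand side
tends to `0` as `τ → ∞`, because `τ (1 - F_a(τ)) ≤ (a/β) (1 - F_{a+1}(τ))`, so the fundamental
theorem of calculus, applied off the countable set `{y}`, identifies `∫_τ^∞ (F - 𝟙)²` with it.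
-/
open MeasureTheory Set

/-- Threshold-weighted CRPS: `twCRPS_τ(F, y) = ∫_τ^∞ (F(z) − 𝟙{z ≥ y})² dz`. -/
noncomputable def twCRPS (F : ℝ → ℝ) (τ y : ℝ) : ℝ :=
  ∫ z in Set.Ioi τ, (F z - if y ≤ z then (1 : ℝ) else 0) ^ 2

/-- Gamma CDF with shape `a` and rate `β`:
`F_{a,β}(x) = (β^a / Γ(a)) ∫_0^x t^{a−1} e^{−βt} dt` for `x ≥ 0`, and `0` for `x < 0`. -/
noncomputable def gammaCDF (a β : ℝ) (x : ℝ) : ℝ :=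
  if x < 0 then 0
  else (β ^ a / Real.Gamma a) * ∫ t in Set.Ioc (0 : ℝ) x, t ^ (a - 1) * Real.exp (-β * t)

/-- Beta function `B(p, q) = Γ(p)Γ(q)/Γ(p+q)`. -/
noncomputable def betaFn (p q : ℝ) : ℝ :=
  Real.Gamma p * Real.Gamma q / Real.Gamma (p + q)

open Filter Topology

theorem integral_Ioi_eq_sub_of_hasDerivAt_neg_off_countable {f g : ℝ → ℝ} {a m : ℝ}
    {s : Set ℝ} (hs : s.Countable) (hcont : ContinuousOn f (Ici a))
    (hderiv : ∀ x ∈ Ioi a \ s, HasDerivAt f (-g x) x) (hg : ∀ x ∈ Ioi a, 0 ≤ g x)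
    (hloc : ∀ b, IntegrableOn g (Ioc a b)) (hf : Tendsto f atTop (𝓝 m)) :
    ∫ x in Ioi a, g x = f a - m := by
  have hFTC : ∀ b, a ≤ b → ∫ x in a..b, g x = f a - f b := fun b hab => by
    have := integral_eq_of_hasDerivAt_off_countable_of_le f (fun x => -g x) hab hs
      (hcont.mono Icc_subset_Ici_self) (fun x hx => hderiv x ⟨hx.1.1, hx.2⟩)
      ((intervalIntegrable_iff_integrableOn_Ioc_of_le hab).2 (hloc b)).neg
    rw [intervalIntegral.integral_neg] at this
    linarith
  have hlim : Tendsto (fun b => ∫ x in a..b, g x) atTop (𝓝 (f a - m)) :=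
    (tendsto_const_nhds.sub hf).congr'
      ((eventually_ge_atTop a).mono fun b hb => (hFTC b hb).symm)
  have hnorm : (fun b => ∫ x in a..b, ‖g x‖) =ᶠ[atTop] fun b => ∫ x in a..b, g x := by
    filter_upwards [eventually_ge_atTop a] with b hb
    refine intervalIntegral.integral_congr_ae (ae_of_all _ fun x hx => ?_)
    rw [uIoc_of_le hb] at hx
    exact Real.norm_of_nonneg (hg x hx.1)
  have hint : IntegrableOn g (Ioi a) :=
    integrableOn_Ioi_of_intervalIntegral_norm_tendsto _ a hloc tendsto_id
      (hlim.congr' hnorm.symm)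
  exact tendsto_nhds_unique (intervalIntegral_tendsto_integral_Ioi a hint tendsto_id) hlim

theorem integrableOn_Ioc_sq_sub_ite {F : ℝ → ℝ} (hF : Measurable F) (h₀ : ∀ z, 0 ≤ F z)
    (h₁ : ∀ z, F z ≤ 1) (y a b : ℝ) :
    IntegrableOn (fun z => (F z - if y ≤ z then 1 else 0) ^ 2) (Ioc a b) := by
  have hmeas : Measurable fun z => (F z - if y ≤ z then 1 else 0) ^ 2 :=
    (hF.sub (measurable_const.ite measurableSet_Ici measurable_const)).pow_const 2
  refine Measure.integrableOn_of_bounded (M := 1) measure_Ioc_lt_top.ne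
    hmeas.aestronglyMeasurable (ae_of_all _ fun z => ?_)
  have := h₀ z
  have := h₁ z
  rw [Real.norm_eq_abs, abs_of_nonneg (sq_nonneg _)]
  split_ifs <;> nlinarith

noncomputable def gammaDensity (a β x : ℝ) : ℝ :=
  β ^ a / Real.Gamma a * (x ^ (a - 1) * Real.exp (-β * x))

section GammaDensity

variable {a β : ℝ}

theorem gammaDensity_nonneg (ha : 0 < a) (hβ : 0 < β) {x : ℝ} (hx : 0 ≤ x) :
    0 ≤ gammaDensity a β x := by
  have := Real.Gamma_pos_of_pos ha
  unfold gammaDensity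
  positivity

theorem intervalIntegrable_gammaDensity (ha : 0 < a) (β x y : ℝ) :
    IntervalIntegrable (gammaDensity a β) volume x y :=
  ((intervalIntegral.intervalIntegrable_rpow' (by linarith)).mul_continuousOn
    (by fun_prop : Continuous fun t => Real.exp (-β * t)).continuousOn).const_mul _

theorem integral_gammaDensity_Ioi (ha : 0 < a) (hβ : 0 < β) :
    ∫ t in Ioi 0, gammaDensity a β t = 1 := by
  have := Real.Gamma_pos_of_pos ha
  have := Real.rpow_pos_of_pos hβ a
  simp only [gammaDensity, integral_const_mul, neg_mul,
    Real.integral_rpow_mul_exp_neg_mul_Ioi ha hβ, Real.div_rpow zero_le_one hβ.le, Real.one_rpow]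
  field_simp

theorem integrableOn_gammaDensity_Ioi (ha : 0 < a) (hβ : 0 < β) :
    IntegrableOn (gammaDensity a β) (Ioi 0) := by
  by_contra h
  have := integral_undef h
  rw [integral_gammaDensity_Ioi ha hβ] at this
  exact one_ne_zero this

theorem continuousAt_gammaDensity {x : ℝ} (hx : 0 < x) :
    ContinuousAt (gammaDensity a β) x := by
  unfold gammaDensity
  exact (Real.continuousAt_rpow_const x _ (Or.inl hx.ne')).mul (by fun_prop) |>.const_mul _

theorem mul_gammaDensity (ha : 0 < a) (hβ : 0 < β) {x : ℝ} (hx : 0 < x) :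
    x * gammaDensity a β x = a / β * gammaDensity (a + 1) β x := by
  have := Real.Gamma_pos_of_pos ha
  simp only [gammaDensity, Real.Gamma_add_one ha.ne', Real.rpow_add_one hβ.ne',
    add_sub_cancel_right,
    show x ^ a = x ^ (a - 1) * x by rw [← Real.rpow_add_one hx.ne', sub_add_cancel]]
  field_simp

theorem hasDerivAt_gammaDensity_add_one (ha : 0 < a) (hβ : 0 < β) {x : ℝ} (hx : 0 < x) :
    HasDerivAt (gammaDensity (a + 1) β)
      (β * (gammaDensity a β x - gammaDensity (a + 1) β x)) x := by
  have := Real.Gamma_pos_of_pos ha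
  have hpow : HasDerivAt (fun t : ℝ => t ^ a) (a * x ^ (a - 1)) x :=
    Real.hasDerivAt_rpow_const (Or.inl hx.ne')
  have hexp : HasDerivAt (fun t => Real.exp (-β * t)) (Real.exp (-β * x) * -β) x := by
    simpa using ((hasDerivAt_id x).const_mul (-β)).exp
  have h : HasDerivAt (fun t => β ^ (a + 1) / Real.Gamma (a + 1) * (t ^ a * Real.exp (-β * t)))
      (β ^ (a + 1) / Real.Gamma (a + 1) *
        (a * x ^ (a - 1) * Real.exp (-β * x) + x ^ a * (Real.exp (-β * x) * -β))) x :=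
    (hpow.mul hexp).const_mul _
  have hfun : gammaDensity (a + 1) β
      = fun t => β ^ (a + 1) / Real.Gamma (a + 1) * (t ^ a * Real.exp (-β * t)) := by
    ext t; simp only [gammaDensity, add_sub_cancel_right]
  rw [← hfun] at h
  refine h.congr_deriv ?_
  simp only [gammaDensity, add_sub_cancel_right, Real.Gamma_add_one ha.ne',
    Real.rpow_add_one hβ.ne']
  field_simp
  ring

theorem gammaDensity_mul_gammaDensity_add_one {x : ℝ} (ha : 0 < a) (hβ : 0 < β)
    (hx : 0 < x) :
    a / β * (gammaDensity a β x * gammaDensity (a + 1) β x)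
      = gammaDensity (2 * a) β (2 * x) / betaFn (1 / 2) a := by
  have := Real.Gamma_pos_of_pos ha
  have htwo : (2 : ℝ) ^ (1 - 2 * a) = ((2 : ℝ) ^ (2 * a - 1))⁻¹ := by
    rw [← Real.rpow_neg zero_le_two, neg_sub]
  have hlegendre : Real.Gamma (a + 1 / 2)
      = Real.Gamma (2 * a) * ((2 : ℝ) ^ (2 * a - 1))⁻¹ * √Real.pi / Real.Gamma a := by
    rw [← htwo, ← Real.Gamma_mul_Gamma_add_half a]
    field_simp
  have hβpow : β ^ (2 * a) = β ^ a * β ^ a := by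
    rw [← Real.rpow_add hβ]; ring_nf
  have hxpow : x ^ (2 * a - 1) = x ^ (a - 1) * x ^ a := by
    rw [← Real.rpow_add hx]; ring_nf
  have hexp : Real.exp (-β * (2 * x)) = Real.exp (-β * x) * Real.exp (-β * x) := by
    rw [← Real.exp_add]; ring_nf
  simp only [gammaDensity, betaFn, add_sub_cancel_right, Real.Gamma_add_one ha.ne',
    Real.rpow_add_one hβ.ne', Real.Gamma_one_half_eq, add_comm (1 / 2 : ℝ) a, hlegendre,
    Real.mul_rpow zero_le_two hx.le, hβpow, hxpow, hexp]
  field_simp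

end GammaDensity

section GammaCDF

variable {a β : ℝ}

theorem gammaCDF_eq_intervalIntegral (a β x : ℝ) :
    gammaCDF a β x = ∫ t in 0..max x 0, gammaDensity a β t := by
  rcases le_or_gt 0 x with hx | hx
  · rw [gammaCDF, if_neg hx.not_gt, max_eq_left hx, intervalIntegral.integral_of_le hx,
      ← integral_const_mul]
    rfl
  · rw [gammaCDF, if_pos hx, max_eq_right hx.le, intervalIntegral.integral_same]

theorem continuous_gammaCDF (ha : 0 < a) : Continuous (gammaCDF a β) := by
  simp only [funext (gammaCDF_eq_intervalIntegral a β)]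
  exact (intervalIntegral.continuous_primitive (intervalIntegrable_gammaDensity ha β) 0).comp
    (continuous_id.max continuous_const)

theorem hasDerivAt_gammaCDF (ha : 0 < a) {x : ℝ} (hx : 0 < x) :
    HasDerivAt (gammaCDF a β) (gammaDensity a β x) x := by
  have h := intervalIntegral.integral_hasDerivAt_right (intervalIntegrable_gammaDensity ha β 0 x)
    (ContinuousAt.stronglyMeasurableAtFilter isOpen_Ioi (fun _ ht => continuousAt_gammaDensity ht)
      x hx) (continuousAt_gammaDensity hx)
  refine h.congr_of_eventuallyEq ?_
  filter_upwards [eventually_gt_nhds hx] with u hu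
  rw [gammaCDF_eq_intervalIntegral, max_eq_left hu.le]

theorem one_sub_gammaCDF (ha : 0 < a) (hβ : 0 < β) {x : ℝ} (hx : 0 ≤ x) :
    1 - gammaCDF a β x = ∫ t in Ioi x, gammaDensity a β t := by
  rw [← integral_gammaDensity_Ioi ha hβ, ← intervalIntegral.integral_interval_add_Ioi
      (integrableOn_gammaDensity_Ioi ha hβ)
      ((integrableOn_gammaDensity_Ioi ha hβ).mono_set (Ioi_subset_Ioi hx)),
    gammaCDF_eq_intervalIntegral, max_eq_left hx, add_sub_cancel_left]

theorem gammaCDF_nonneg (ha : 0 < a) (hβ : 0 < β) (x : ℝ) : 0 ≤ gammaCDF a β x := by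
  rw [gammaCDF_eq_intervalIntegral]
  exact intervalIntegral.integral_nonneg (le_max_right x 0)
    fun t ht => gammaDensity_nonneg ha hβ ht.1

theorem gammaCDF_le_one (ha : 0 < a) (hβ : 0 < β) (x : ℝ) : gammaCDF a β x ≤ 1 := by
  rcases lt_or_ge x 0 with hx | hx
  · simp [gammaCDF, hx]
  · have := one_sub_gammaCDF ha hβ hx
    have : 0 ≤ ∫ t in Ioi x, gammaDensity a β t :=
      setIntegral_nonneg measurableSet_Ioi fun t ht => gammaDensity_nonneg ha hβ (hx.trans ht.le)
    linarith

theorem tendsto_gammaCDF_atTop (ha : 0 < a) (hβ : 0 < β) :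
    Tendsto (gammaCDF a β) atTop (𝓝 1) := by
  rw [← integral_gammaDensity_Ioi ha hβ]
  refine (intervalIntegral_tendsto_integral_Ioi 0 (integrableOn_gammaDensity_Ioi ha hβ)
    tendsto_id).congr' ?_
  filter_upwards [eventually_ge_atTop 0] with x hx
  rw [gammaCDF_eq_intervalIntegral, max_eq_left hx, id]

-- Markov's inequality `x P(X > x) ≤ E[X; X > x]`, with `t f_a = (a / β) f_{a+1}`.
theorem mul_one_sub_gammaCDF_le (ha : 0 < a) (hβ : 0 < β) {x : ℝ} (hx : 0 ≤ x) :
    x * (1 - gammaCDF a β x) ≤ a / β * (1 - gammaCDF (a + 1) β x) := by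
  have hint (b : ℝ) (hb : 0 < b) : IntegrableOn (gammaDensity b β) (Ioi x) :=
    (integrableOn_gammaDensity_Ioi hb hβ).mono_set (Ioi_subset_Ioi hx)
  rw [one_sub_gammaCDF ha hβ hx, one_sub_gammaCDF (by linarith) hβ hx, ← integral_const_mul,
    ← integral_const_mul]
  refine setIntegral_mono_on ((hint a ha).const_mul x) ((hint _ (by linarith)).const_mul _)
    measurableSet_Ioi fun t ht => ?_
  have ht0 : 0 < t := hx.trans_lt ht
  rw [← mul_gammaDensity ha hβ ht0]
  exact mul_le_mul_of_nonneg_right (le_of_lt ht) (gammaDensity_nonneg ha hβ ht0.le)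

theorem tendsto_mul_one_sub_gammaCDF_sq_atTop (ha : 0 < a) (hβ : 0 < β) :
    Tendsto (fun x => x * (1 - gammaCDF a β x) ^ 2) atTop (𝓝 0) := by
  have hlim : Tendsto (fun x => a / β * (1 - gammaCDF (a + 1) β x)) atTop (𝓝 0) := by
    simpa using ((tendsto_gammaCDF_atTop (by linarith : 0 < a + 1) hβ).const_sub 1).const_mul
      (a / β)
  refine squeeze_zero' ?_ ?_ hlim
  · filter_upwards [eventually_ge_atTop 0] with x hx
    positivity
  · filter_upwards [eventually_ge_atTop 0] with x hx
    have h0 : 0 ≤ 1 - gammaCDF a β x := sub_nonneg.2 (gammaCDF_le_one ha hβ x)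
    have h1 : 1 - gammaCDF a β x ≤ 1 := by linarith [gammaCDF_nonneg ha hβ x]
    calc x * (1 - gammaCDF a β x) ^ 2 ≤ x * (1 - gammaCDF a β x) :=
          mul_le_mul_of_nonneg_left (pow_le_of_le_one h0 h1 two_ne_zero) hx
      _ ≤ _ := mul_one_sub_gammaCDF_le ha hβ hx

theorem gammaCDF_sub_gammaCDF_add_one (ha : 0 < a) (hβ : 0 < β) {x : ℝ} (hx : 0 ≤ x) :
    gammaCDF a β x - gammaCDF (a + 1) β x = gammaDensity (a + 1) β x / β := by
  have hcont : Continuous (gammaDensity (a + 1) β) := by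
    unfold gammaDensity
    exact continuous_const.mul ((Real.continuous_rpow_const (by linarith)).mul (by fun_prop))
  have hderiv : ∀ t ∈ Ioo 0 x, HasDerivAt (fun t => gammaDensity (a + 1) β t / β)
      (gammaDensity a β t - gammaDensity (a + 1) β t) t := fun t ht => by
    simpa only [mul_div_cancel_left₀ _ hβ.ne'] using
      (hasDerivAt_gammaDensity_add_one ha hβ ht.1).div_const β
  have hzero : gammaDensity (a + 1) β 0 = 0 := by
    simp [gammaDensity, Real.zero_rpow ha.ne']
  rw [gammaCDF_eq_intervalIntegral, gammaCDF_eq_intervalIntegral, max_eq_left hx,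
    ← intervalIntegral.integral_sub (intervalIntegrable_gammaDensity ha β 0 x)
      (intervalIntegrable_gammaDensity (by linarith) β 0 x),
    intervalIntegral.integral_eq_sub_of_hasDerivAt_of_le hx (by fun_prop) hderiv
      ((intervalIntegrable_gammaDensity ha β 0 x).sub
        (intervalIntegrable_gammaDensity (by linarith) β 0 x)),
    hzero, zero_div, sub_zero]

end GammaCDF

-- The closed form is `gammaThresholdTerm a β τ + gammaObservationTerm a β (max y τ)`.
noncomputable def gammaThresholdTerm (a β τ : ℝ) : ℝ :=
  -τ * gammaCDF a β τ ^ 2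
    + a / β * (1 - gammaCDF a β τ ^ 2 + 2 * gammaCDF a β τ * gammaCDF (a + 1) β τ)
    - (1 - gammaCDF (2 * a) β (2 * τ)) / (β * betaFn (1 / 2) a)

noncomputable def gammaObservationTerm (a β v : ℝ) : ℝ :=
  v * (2 * gammaCDF a β v - 1) - 2 * (a / β) * gammaCDF (a + 1) β v

section ClosedForm

variable {a β : ℝ}

theorem continuous_gammaThresholdTerm (ha : 0 < a) : Continuous (gammaThresholdTerm a β) := by
  have := continuous_gammaCDF (β := β) ha
  have := continuous_gammaCDF (β := β) (by linarith : 0 < a + 1)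
  have := continuous_gammaCDF (β := β) (by linarith : 0 < 2 * a)
  unfold gammaThresholdTerm
  fun_prop

theorem continuous_gammaObservationTerm (ha : 0 < a) :
    Continuous (gammaObservationTerm a β) := by
  have := continuous_gammaCDF (β := β) ha
  have := continuous_gammaCDF (β := β) (by linarith : 0 < a + 1)
  unfold gammaObservationTerm
  fun_prop

theorem hasDerivAt_gammaThresholdTerm (ha : 0 < a) (hβ : 0 < β) {x : ℝ} (hx : 0 < x) :
    HasDerivAt (gammaThresholdTerm a β) (-gammaCDF a β x ^ 2) x := by
  have hF := hasDerivAt_gammaCDF (β := β) ha hx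
  have hF₁ := hasDerivAt_gammaCDF (β := β) (by linarith : 0 < a + 1) hx
  have hF₂ := (hasDerivAt_gammaCDF (β := β) (by linarith : 0 < 2 * a)
    (by linarith : 0 < 2 * x)).comp x ((hasDerivAt_id x).const_mul 2)
  have h := (((hasDerivAt_id x).neg.mul (hF.pow 2)).add
    ((((hF.pow 2).const_sub 1).add ((hF.const_mul 2).mul hF₁)).const_mul (a / β))).sub
    ((hF₂.const_sub 1).div_const (β * betaFn (1 / 2) a))
  refine h.congr_deriv ?_
  have hmean := mul_gammaDensity ha hβ hx
  have hdiff := gammaCDF_sub_gammaCDF_add_one ha hβ hx.le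
  have hdup := gammaDensity_mul_gammaDensity_add_one ha hβ hx
  simp only [Pi.pow_apply, Pi.neg_apply, id, Nat.cast_ofNat]
  linear_combination (-2 * gammaCDF a β x) * hmean
    - (2 * a / β * gammaDensity a β x) * hdiff - 2 / β * hdup

theorem hasDerivAt_gammaObservationTerm (ha : 0 < a) (hβ : 0 < β) {x : ℝ} (hx : 0 < x) :
    HasDerivAt (gammaObservationTerm a β) (2 * gammaCDF a β x - 1) x := by
  have hF := hasDerivAt_gammaCDF (β := β) ha hx
  have hF₁ := hasDerivAt_gammaCDF (β := β) (by linarith : 0 < a + 1) hx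
  have h := ((hasDerivAt_id x).mul ((hF.const_mul 2).sub_const 1)).sub
    (hF₁.const_mul (2 * (a / β)))
  refine h.congr_deriv ?_
  have hmean := mul_gammaDensity ha hβ hx
  simp only [id]
  linear_combination 2 * hmean

theorem hasDerivAt_gammaObservationTerm_max (ha : 0 < a) (hβ : 0 < β) {x y : ℝ} (hx : 0 < x)
    (hxy : x ≠ y) :
    HasDerivAt (fun τ => gammaObservationTerm a β (max y τ))
      (if y ≤ x then 2 * gammaCDF a β x - 1 else 0) x := by
  rcases hxy.lt_or_gt with hlt | hgt
  · rw [if_neg hlt.not_ge]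
    refine (hasDerivAt_const x (gammaObservationTerm a β y)).congr_of_eventuallyEq ?_
    filter_upwards [eventually_lt_nhds hlt] with τ hτ
    rw [max_eq_left hτ.le]
  · rw [if_pos hgt.le]
    refine (hasDerivAt_gammaObservationTerm ha hβ hx).congr_of_eventuallyEq ?_
    filter_upwards [eventually_gt_nhds hgt] with τ hτ
    rw [max_eq_right hτ.le]

theorem tendsto_gammaThresholdTerm_add_gammaObservationTerm (ha : 0 < a) (hβ : 0 < β) :
    Tendsto (fun τ => gammaThresholdTerm a β τ + gammaObservationTerm a β τ) atTop (𝓝 0) := by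
  have hF := tendsto_gammaCDF_atTop ha hβ
  have hF₁ := tendsto_gammaCDF_atTop (by linarith : 0 < a + 1) hβ
  have hF₂ := tendsto_gammaCDF_atTop (by linarith : 0 < 2 * a) hβ
  have h₁ : Tendsto (fun τ => (1 - gammaCDF a β τ)
      * (1 + gammaCDF a β τ - 2 * gammaCDF (a + 1) β τ)) atTop (𝓝 0) := by
    simpa using (hF.const_sub 1).mul ((hF.const_add 1).sub (hF₁.const_mul 2))
  have h₂ : Tendsto (fun τ => 1 - gammaCDF (2 * a) β (2 * τ)) atTop (𝓝 0) := by
    simpa using (hF₂.comp (tendsto_id.const_mul_atTop two_pos)).const_sub 1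
  have h := ((tendsto_mul_one_sub_gammaCDF_sq_atTop ha hβ).neg.add (h₁.const_mul (a / β))).sub
    (h₂.div_const (β * betaFn (1 / 2) a))
  rw [neg_zero, mul_zero, zero_div, add_zero, sub_zero] at h
  refine h.congr fun τ => ?_
  simp only [gammaThresholdTerm, gammaObservationTerm]
  ring

end ClosedForm

theorem twCRPS_gamma (α β : ℝ) (hα : 0 < α) (hβ : 0 < β)
    (τ y : ℝ) (hτ : 0 ≤ τ) :
    twCRPS (gammaCDF α β) τ y =
      -τ * (gammaCDF α β τ) ^ 2
        + max y τ * (2 * gammaCDF α β (max y τ) - 1)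
        + α / β *
          (1 - (gammaCDF α β τ) ^ 2 + 2 * gammaCDF α β τ * gammaCDF (α + 1) β τ
            - 2 * gammaCDF (α + 1) β (max y τ))
        - (1 - gammaCDF (2 * α) β (2 * τ)) / (β * betaFn (1 / 2) α) := by
  have hderiv : ∀ x ∈ Ioi τ \ {y}, HasDerivAt
      (fun t => gammaThresholdTerm α β t + gammaObservationTerm α β (max y t))
      (-(gammaCDF α β x - if y ≤ x then 1 else 0) ^ 2) x := fun x ⟨hx, hxy⟩ => by
    refine ((hasDerivAt_gammaThresholdTerm hα hβ (hτ.trans_lt hx)).add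
      (hasDerivAt_gammaObservationTerm_max hα hβ (hτ.trans_lt hx) hxy)).congr_deriv ?_
    split_ifs <;> ring
  have hlim : Tendsto (fun t => gammaThresholdTerm α β t + gammaObservationTerm α β (max y t))
      atTop (𝓝 0) :=
    (tendsto_gammaThresholdTerm_add_gammaObservationTerm hα hβ).congr' <|
      (eventually_ge_atTop y).mono fun t ht => by simp only [max_eq_right ht]
  have hcont :
      Continuous fun t => gammaThresholdTerm α β t + gammaObservationTerm α β (max y t) :=
    (continuous_gammaThresholdTerm hα).add
      ((continuous_gammaObservationTerm hα).comp (continuous_const.max continuous_id))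
  rw [twCRPS, integral_Ioi_eq_sub_of_hasDerivAt_neg_off_countable (countable_singleton y)
    hcont.continuousOn hderiv (fun _ _ => sq_nonneg _)
    (integrableOn_Ioc_sq_sub_ite (continuous_gammaCDF hα).measurable (gammaCDF_nonneg hα hβ)
      (gammaCDF_le_one hα hβ) y τ) hlim]
  simp only [gammaThresholdTerm, gammaObservationTerm]
  ring
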